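/- There exist constants C₄ ≥ 1, c > 0 and C > 0, depending only on d and γ, such that for all integers k ≥ 1, all r ≥ 1 with ρ ≥ C₄√k, and all ξ ≥ 0: c/√κ̃₂ ≤ ñ_k ≤ C/√κ̃₂. (Lemma 3.7.) -/
import Mathlib


open MeasureTheory Finset
open scoped Nat

noncomputable section

/-- ρ = r^{d/2} -/
def rho (d : ℕ) (r : ℝ) : ℝ := r ^ ((d : ℝ) / 2)

/-- tilted cumulant coefficients κ̃_n = d₁ ∫₀¹ e^{ξu/ρ} u^{n-1-d/γ} du -/
def kt (d : ℕ) (γ r ξ : ℝ) (n : ℕ) : ℝ :=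
  (2 - (d : ℝ) / γ) *
    ∫ u in (0:ℝ)..1, Real.exp (ξ * u / rho d r) * u ^ ((n : ℝ) - 1 - (d : ℝ) / γ)

/-- c̃_{j,ℓ} = (1/ℓ!) ∑_{3 ≤ nᵢ ≤ k+2, ∑(nᵢ−2)=j} ∏ᵢ κ̃_{nᵢ}/nᵢ! -/
def ctilde (d : ℕ) (γ r ξ : ℝ) (k j l : ℕ) : ℝ :=
  (1 / (l.factorial : ℝ)) *
    ∑ n ∈ (Fintype.piFinset fun _ : Fin l => Finset.Icc 3 (k + 2)).filter
        (fun n => ∑ i, (n i - 2) = j),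
      ∏ i, kt d γ r ξ (n i) / ((n i).factorial : ℝ)

/-- ñ_k, the Edgeworth main term, with H_n the probabilists' Hermite polynomials -/
def ntilde (d : ℕ) (γ r ξ : ℝ) (k : ℕ) : ℝ :=
  (1 / Real.sqrt (2 * Real.pi * kt d γ r ξ 2)) *
    (1 + ∑ j ∈ Finset.Icc 1 k, ((-1 : ℝ) ^ j / rho d r ^ j) *
      ∑ l ∈ Finset.Icc 1 j,
        ctilde d γ r ξ k j l / (kt d γ r ξ 2) ^ ((j : ℝ) / 2 + (l : ℝ)) *
          (((Polynomial.hermite (j + 2 * l)).eval 0 : ℤ) : ℝ))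

lemma rho_pos {d : ℕ} {r : ℝ} (hr : 1 ≤ r) : 0 < rho d r :=
  Real.rpow_pos_of_pos (lt_of_lt_of_le one_pos hr) _

lemma integrable_aux {c ξ ρ : ℝ} (hc : 0 < c) :
    IntervalIntegrable (fun u : ℝ => Real.exp (ξ * u / ρ) * u ^ c) volume 0 1 := by
  apply ContinuousOn.intervalIntegrable
  rw [Set.uIcc_of_le zero_le_one]
  have h1 : ContinuousOn (fun u : ℝ => Real.exp (ξ * u / ρ)) (Set.Icc 0 1) :=
    (Real.continuous_exp.comp ((continuous_const.mul continuous_id).div_const _)).continuousOn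
  have h2 : ContinuousOn (fun u : ℝ => u ^ c) (Set.Icc 0 1) := fun u _ =>
    (Real.continuousAt_rpow_const u c (Or.inr hc.le)).continuousWithinAt
  exact h1.mul h2

lemma integrable_aux' {c : ℝ} (hc : 0 < c) :
    IntervalIntegrable (fun u : ℝ => u ^ c) volume 0 1 := by
  apply ContinuousOn.intervalIntegrable
  rw [Set.uIcc_of_le zero_le_one]
  exact fun u _ => (Real.continuousAt_rpow_const u c (Or.inr hc.le)).continuousWithinAt

section
variable {d : ℕ} {γ r ξ : ℝ} (hd : 1 ≤ d) (hγ : (d : ℝ) < γ) (hr : 1 ≤ r) (hξ : 0 ≤ ξ)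
include hd hγ

lemma a_lt_one : (d : ℝ) / γ < 1 := by
  have hγ0 : (0:ℝ) < γ := lt_of_le_of_lt (Nat.cast_nonneg d) hγ
  exact (div_lt_one hγ0).mpr hγ

lemma a_nonneg : 0 ≤ (d : ℝ) / γ := by
  have hγ0 : (0:ℝ) < γ := lt_of_le_of_lt (Nat.cast_nonneg d) hγ
  positivity

lemma exp_pos_aux {n : ℕ} (hn : 2 ≤ n) : 0 < (n : ℝ) - 1 - (d:ℝ)/γ := by
  have := a_lt_one hd hγ
  have : ((2:ℕ) : ℝ) ≤ (n:ℝ) := Nat.cast_le.mpr hn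
  push_cast at this
  nlinarith [a_lt_one hd hγ]

lemma kt_nonneg {n : ℕ} (hn : 2 ≤ n) (hξ : 0 ≤ ξ) (hr : 1 ≤ r) : 0 ≤ kt d γ r ξ n := by
  have h1 : (0:ℝ) < 2 - (d:ℝ)/γ := by nlinarith [a_lt_one hd hγ]
  apply mul_nonneg h1.le
  apply intervalIntegral.integral_nonneg zero_le_one
  intro u hu
  have := hu.1
  positivity

lemma kt_le_kt_two {n : ℕ} (hn : 2 ≤ n) (hξ : 0 ≤ ξ) (hr : 1 ≤ r) :
    kt d γ r ξ n ≤ kt d γ r ξ 2 := by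
  have h1 : (0:ℝ) < 2 - (d:ℝ)/γ := by nlinarith [a_lt_one hd hγ]
  unfold kt
  apply mul_le_mul_of_nonneg_left _ h1.le
  apply intervalIntegral.integral_mono_on zero_le_one
    (integrable_aux (exp_pos_aux hd hγ hn)) (integrable_aux (exp_pos_aux hd hγ le_rfl))
  intro u hu
  apply mul_le_mul_of_nonneg_left _ (Real.exp_nonneg _)
  rcases eq_or_lt_of_le hu.1 with h0 | h0
  · rw [← h0]
    rw [Real.zero_rpow (ne_of_gt (exp_pos_aux hd hγ hn)),
        Real.zero_rpow (ne_of_gt (exp_pos_aux hd hγ le_rfl))]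
  · apply Real.rpow_le_rpow_of_exponent_ge h0 hu.2
    have : ((2:ℕ):ℝ) ≤ (n:ℝ) := Nat.cast_le.mpr hn
    push_cast at this
    linarith

lemma one_le_kt_two (hξ : 0 ≤ ξ) (hr : 1 ≤ r) : 1 ≤ kt d γ r ξ 2 := by
  have h1 : (0:ℝ) < 2 - (d:ℝ)/γ := by nlinarith [a_lt_one hd hγ]
  have hc : (0:ℝ) < ((2:ℕ):ℝ) - 1 - (d:ℝ)/γ := exp_pos_aux hd hγ le_rfl
  have key : ∫ u in (0:ℝ)..1, u ^ (((2:ℕ):ℝ) - 1 - (d:ℝ)/γ)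
      ≤ ∫ u in (0:ℝ)..1, Real.exp (ξ * u / rho d r) * u ^ (((2:ℕ):ℝ) - 1 - (d:ℝ)/γ) := by
    apply intervalIntegral.integral_mono_on zero_le_one (integrable_aux' hc)
      (integrable_aux hc)
    intro u hu
    have h2 : (0:ℝ) ≤ u ^ (((2:ℕ):ℝ) - 1 - (d:ℝ)/γ) := Real.rpow_nonneg hu.1 _
    have h3 : (1:ℝ) ≤ Real.exp (ξ * u / rho d r) := by
      rw [← Real.exp_zero]
      apply Real.exp_le_exp.mpr
      have := rho_pos (d := d) hr
      have := hu.1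
      positivity
    nlinarith
  have hval : ∫ u in (0:ℝ)..1, u ^ (((2:ℕ):ℝ) - 1 - (d:ℝ)/γ) = 1 / (2 - (d:ℝ)/γ) := by
    rw [integral_rpow (Or.inl (by linarith))]
    rw [Real.one_rpow, Real.zero_rpow (by linarith)]
    push_cast
    ring_nf
  unfold kt
  calc (1:ℝ) = (2 - (d:ℝ)/γ) * (1 / (2 - (d:ℝ)/γ)) := by field_simp
  _ ≤ _ := by
      apply mul_le_mul_of_nonneg_left _ h1.le
      rw [← hval]; exact key

end

lemma fact_stirling (n : ℕ) : (n:ℝ)^n ≤ (n.factorial : ℝ) * Real.exp n := by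
  have h1 : (n:ℝ)^n / (n.factorial : ℝ) ≤ Real.exp n := by
    calc (n:ℝ)^n / (n.factorial : ℝ)
        ≤ ∑ i ∈ range (n+1), (n:ℝ)^i / (i.factorial : ℝ) :=
          Finset.single_le_sum (f := fun i => (n:ℝ)^i / (i.factorial : ℝ))
            (fun i _ => by positivity) (self_mem_range_succ n)
    _ ≤ Real.exp n := Real.sum_le_exp_of_nonneg (Nat.cast_nonneg n) (n+1)
  have hf : (0:ℝ) < (n.factorial : ℝ) := by exact_mod_cast n.factorial_pos
  calc (n:ℝ)^n = (n:ℝ)^n / (n.factorial : ℝ) * (n.factorial : ℝ) := by field_simp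
  _ ≤ Real.exp n * (n.factorial : ℝ) := mul_le_mul_of_nonneg_right h1 hf.le
  _ = _ := by ring

lemma sum_inv_fact_le (l m : ℕ) (S : Finset (Fin l → ℕ)) (hS : ∀ n ∈ S, ∑ i, n i = m) :
    ∑ n ∈ S, ∏ i, (1:ℝ)/((n i).factorial : ℝ) ≤ (l:ℝ)^m / (m.factorial : ℝ) := by
  classical
  have hmfact : (0:ℝ) < (m.factorial : ℝ) := by exact_mod_cast m.factorial_pos
  have key : ∀ n ∈ S, ∏ i, (1:ℝ)/((n i).factorial : ℝ)
      = (Nat.multinomial univ n : ℝ) / (m.factorial : ℝ) := by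
    intro n hn
    have hspec := Nat.multinomial_spec (univ : Finset (Fin l)) n
    rw [hS n hn] at hspec
    have hcast : ((∏ i, (n i).factorial : ℕ) : ℝ) * (Nat.multinomial univ n : ℝ)
        = (m.factorial : ℝ) := by exact_mod_cast congrArg (Nat.cast (R := ℝ)) hspec
    have hppos : (0:ℝ) < ∏ i, ((n i).factorial : ℝ) := by positivity
    push_cast at hcast
    rw [Finset.prod_div_distrib, Finset.prod_const_one]
    field_simp
    linarith
  rw [Finset.sum_congr rfl key, ← Finset.sum_div]
  have hsub : S ⊆ Finset.piAntidiag univ m := by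
    intro n hn
    rw [Finset.mem_piAntidiag]
    exact ⟨hS n hn, fun i _ => mem_univ i⟩
  have h2 : ∑ n ∈ S, (Nat.multinomial univ n : ℝ) ≤ (l:ℝ)^m := by
    calc ∑ n ∈ S, (Nat.multinomial univ n : ℝ)
        ≤ ∑ n ∈ Finset.piAntidiag (univ : Finset (Fin l)) m, (Nat.multinomial univ n : ℝ) :=
          Finset.sum_le_sum_of_subset_of_nonneg hsub (fun n _ _ => by positivity)
    _ = (l:ℝ)^m := by
        have := Finset.sum_pow_eq_sum_piAntidiag (univ : Finset (Fin l)) (fun _ => (1:ℝ)) m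
        simp only [one_pow, Finset.prod_const_one, mul_one, Finset.sum_const, card_univ,
          Fintype.card_fin, nsmul_eq_mul, Nat.cast_id] at this
        exact this.symm
  gcongr

lemma hermite_eval_zero_abs (m : ℕ) :
    |(((Polynomial.hermite m).eval 0 : ℤ) : ℝ)|
      ≤ (m.factorial : ℝ) / (2^(m/2) * ((m/2).factorial : ℝ)) := by
  have hpos : (0:ℝ) < 2^(m/2) * ((m/2).factorial : ℝ) := by positivity
  rcases Nat.even_or_odd m with he | ho
  · obtain ⟨n, hn⟩ := he
    have hm : m = 2 * n := by omega
    subst hm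
    have h0 : (Polynomial.hermite (2*n)).coeff 0 = (-1)^n * ((2*n-1)‼ : ℕ) := by
      have := Polynomial.coeff_hermite_explicit n 0
      simp only [add_zero, Nat.choose_zero_right, Nat.cast_one, mul_one] at this
      exact this
    rw [← Polynomial.coeff_zero_eq_eval_zero, h0]
    have hdf : (2*n)‼ * (2*n-1)‼ = (2*n).factorial := by
      rcases n with _ | n
      · simp
      · have := Nat.factorial_eq_mul_doubleFactorial (2*(n+1)-1)
        have h2 : 2*(n+1)-1+1 = 2*(n+1) := by omega
        rw [h2] at this
        omega
    have hdm : (2*n)‼ = 2^n * n.factorial := Nat.doubleFactorial_two_mul n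
    have hhalf : 2*n/2 = n := by omega
    rw [hhalf]
    push_cast
    rw [abs_mul, abs_pow, abs_neg, abs_one, one_pow, one_mul,
      abs_of_nonneg (by positivity : (0:ℝ) ≤ (((2*n-1)‼ : ℕ) : ℝ))]
    rw [le_div_iff₀ (by positivity)]
    have hkey : (((2*n-1)‼ : ℕ) : ℝ) * (2^n * (n.factorial:ℝ)) = ((2*n).factorial : ℝ) := by
      have : (2*n-1)‼ * (2^n * n.factorial) = (2*n).factorial := by
        rw [← hdm, mul_comm]; exact hdf
      exact_mod_cast congrArg (Nat.cast (R := ℝ)) this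
    rw [hkey]
  · have h0 : (Polynomial.hermite m).coeff 0 = 0 :=
      Polynomial.coeff_hermite_of_odd_add (by simpa using ho)
    rw [← Polynomial.coeff_zero_eq_eval_zero, h0]
    simp only [Int.cast_zero, abs_zero]
    positivity

lemma nat_le_exp (j : ℕ) : (j:ℝ) ≤ Real.exp j := by
  have := Real.add_one_le_exp (j:ℝ)
  linarith

lemma sqrt_le_exp_half (j : ℕ) : Real.sqrt j ≤ Real.exp ((j:ℝ)/2) := by
  have h1 : Real.sqrt (j:ℝ) ≤ Real.sqrt (Real.exp j) := Real.sqrt_le_sqrt (nat_le_exp j)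
  have h2 : Real.sqrt (Real.exp (j:ℝ)) = Real.exp ((j:ℝ)/2) := by
    rw [show Real.exp (j:ℝ) = Real.exp ((j:ℝ)/2) ^ 2 by
      rw [sq, ← Real.exp_add]; ring_nf]
    exact Real.sqrt_sq (Real.exp_nonneg _)
  rw [h2] at h1; exact h1

lemma core (j l : ℕ) (hl1 : 1 ≤ l) (hlj : l ≤ j) :
    (l:ℝ)^(j+2*l) / ((l.factorial:ℝ) * 2^(l + j/2) * ((l + j/2).factorial:ℝ))
      ≤ Real.exp (4*j) * (Real.sqrt j)^j / j := by
  set q := j / 2 with hq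
  set b := l + q with hb
  have hj1 : 1 ≤ j := le_trans hl1 hlj
  have hjR : (1:ℝ) ≤ (j:ℝ) := by exact_mod_cast hj1
  have hlb : (l:ℝ) ≤ (b:ℝ) := by exact_mod_cast Nat.le_add_right l q
  have hfl : (0:ℝ) < (l.factorial:ℝ) := by exact_mod_cast l.factorial_pos
  have hfb : (0:ℝ) < (b.factorial:ℝ) := by exact_mod_cast b.factorial_pos
  have h2b : (1:ℝ) ≤ 2^b := one_le_pow₀ (by norm_num)
  -- Step A: numerator bound
  have eA : (l:ℝ)^(j+2*l) = (l:ℝ)^(j-q) * (l:ℝ)^l * (l:ℝ)^b := by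
    rw [← pow_add, ← pow_add]; congr 1; omega
  have hA : (l:ℝ)^(j+2*l) ≤ (j:ℝ)^(j-q) * ((l.factorial:ℝ) * Real.exp l)
      * ((b.factorial:ℝ) * Real.exp b) := by
    rw [eA]
    have h1 : (l:ℝ)^(j-q) ≤ (j:ℝ)^(j-q) :=
      pow_le_pow_left₀ (Nat.cast_nonneg l) (by exact_mod_cast hlj) _
    have h2 : (l:ℝ)^l ≤ (l.factorial:ℝ) * Real.exp l := fact_stirling l
    have h3 : (l:ℝ)^b ≤ (b.factorial:ℝ) * Real.exp b := by
      calc (l:ℝ)^b ≤ (b:ℝ)^b := pow_le_pow_left₀ (Nat.cast_nonneg l) hlb _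
      _ ≤ _ := fact_stirling b
    have := mul_le_mul (mul_le_mul h1 h2 (by positivity) (by positivity)) h3
      (by positivity) (by positivity)
    exact this
  -- divide
  have step1 : (l:ℝ)^(j+2*l) / ((l.factorial:ℝ) * 2^b * (b.factorial:ℝ))
      ≤ (j:ℝ)^(j-q) * Real.exp (l+b) := by
    rw [div_le_iff₀ (by positivity)]
    calc (l:ℝ)^(j+2*l) ≤ (j:ℝ)^(j-q) * ((l.factorial:ℝ) * Real.exp l)
        * ((b.factorial:ℝ) * Real.exp b) := hA
    _ = (j:ℝ)^(j-q) * Real.exp ((l:ℝ)+(b:ℝ)) * ((l.factorial:ℝ) * 1 * (b.factorial:ℝ)) := by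
        rw [Real.exp_add]; ring
    _ ≤ (j:ℝ)^(j-q) * Real.exp ((l:ℝ)+(b:ℝ)) * ((l.factorial:ℝ) * 2^b * (b.factorial:ℝ)) := by
        have hp : (0:ℝ) ≤ (j:ℝ)^(j-q) * Real.exp ((l:ℝ)+(b:ℝ)) := by positivity
        gcongr
    _ = (j:ℝ)^(j-q) * Real.exp ((l:ℝ)+(b:ℝ)) * ((l.factorial:ℝ) * 2^b * (b.factorial:ℝ)) := rfl
  -- exponential bound
  have hexp : Real.exp ((l:ℝ)+(b:ℝ)) ≤ Real.exp ((5/2)*(j:ℝ)) := by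
    apply Real.exp_le_exp.mpr
    have h1 : (l:ℝ) ≤ (j:ℝ) := by exact_mod_cast hlj
    have h2 : (q:ℝ) ≤ (j:ℝ)/2 := by
      rw [hq]
      rw [le_div_iff₀ (by norm_num : (0:ℝ) < 2)]
      exact_mod_cast Nat.div_mul_le_self j 2
    have : (b:ℝ) = (l:ℝ) + (q:ℝ) := by exact_mod_cast rfl
    rw [this]; linarith
  -- power bound: j^(j-q) ≤ (√j)^j * √j
  have hpow : (j:ℝ)^(j-q) ≤ (Real.sqrt j)^j * Real.sqrt j := by
    have hsq : ((Real.sqrt j))^2 = (j:ℝ) := Real.sq_sqrt (Nat.cast_nonneg j)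
    have h1 : (j:ℝ)^(j-q) = (Real.sqrt j)^(2*(j-q)) := by
      rw [pow_mul, hsq]
    rw [h1, ← pow_succ]
    apply pow_le_pow_right₀ _ (by omega)
    have : (1:ℝ) ≤ Real.sqrt 1 := by rw [Real.sqrt_one]
    calc (1:ℝ) = Real.sqrt 1 := by rw [Real.sqrt_one]
    _ ≤ Real.sqrt j := Real.sqrt_le_sqrt hjR
  -- combine
  have final : (j:ℝ)^(j-q) * Real.exp ((l:ℝ)+(b:ℝ)) ≤ Real.exp (4*j) * (Real.sqrt j)^j / j := by
    rw [le_div_iff₀ (by positivity : (0:ℝ) < (j:ℝ))]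
    calc (j:ℝ)^(j-q) * Real.exp ((l:ℝ)+(b:ℝ)) * j
        ≤ ((Real.sqrt j)^j * Real.sqrt j) * Real.exp ((5/2)*(j:ℝ)) * Real.exp j := by
          gcongr <;> first | positivity | exact hpow | exact hexp | exact nat_le_exp j
    _ ≤ ((Real.sqrt j)^j * Real.exp ((j:ℝ)/2)) * Real.exp ((5/2)*(j:ℝ)) * Real.exp j := by
          gcongr <;> first | positivity | exact sqrt_le_exp_half j
    _ = Real.exp ((j:ℝ)/2 + (5/2)*(j:ℝ) + (j:ℝ)) * (Real.sqrt j)^j := by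
          rw [Real.exp_add, Real.exp_add]; ring
    _ ≤ Real.exp (4*j) * (Real.sqrt j)^j := by
          gcongr <;> first | positivity | (push_cast; linarith)
  exact step1.trans final

section
variable {d : ℕ} {γ r ξ : ℝ} (hd : 1 ≤ d) (hγ : (d : ℝ) < γ) (hr : 1 ≤ r) (hξ : 0 ≤ ξ)
include hd hγ hr hξ

lemma ctilde_nonneg (k j l : ℕ) : 0 ≤ ctilde d γ r ξ k j l := by
  unfold ctilde
  apply mul_nonneg (by positivity)
  apply Finset.sum_nonneg
  intro n hn
  apply Finset.prod_nonneg
  intro i _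
  have h3 : 3 ≤ n i := by
    rw [Finset.mem_filter, Fintype.mem_piFinset] at hn
    exact (Finset.mem_Icc.mp (hn.1 i)).1
  exact div_nonneg (kt_nonneg hd hγ (by omega) hξ hr) (by positivity)

lemma ctilde_le (k j l : ℕ) (hl : 1 ≤ l) :
    ctilde d γ r ξ k j l ≤ (kt d γ r ξ 2)^l * (l:ℝ)^(j+2*l)
      / ((l.factorial:ℝ) * ((j+2*l).factorial : ℝ)) := by
  set F := (Fintype.piFinset fun _ : Fin l => Finset.Icc 3 (k + 2)).filter
      (fun n => ∑ i, (n i - 2) = j) with hF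
  have hmem : ∀ n ∈ F, (∀ i, 3 ≤ n i) ∧ ∑ i, n i = j + 2*l := by
    intro n hn
    rw [hF, Finset.mem_filter, Fintype.mem_piFinset] at hn
    have h3 : ∀ i, 3 ≤ n i := fun i => (Finset.mem_Icc.mp (hn.1 i)).1
    refine ⟨h3, ?_⟩
    have : ∀ i ∈ (univ : Finset (Fin l)), n i = (n i - 2) + 2 := fun i _ => by
      have := h3 i; omega
    rw [Finset.sum_congr rfl this, Finset.sum_add_distrib, hn.2, Finset.sum_const,
      card_univ, Fintype.card_fin, smul_eq_mul]
    omega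
  have hkt2 : 0 ≤ kt d γ r ξ 2 := kt_nonneg hd hγ le_rfl hξ hr
  have step : ∑ n ∈ F, ∏ i, kt d γ r ξ (n i) / ((n i).factorial : ℝ)
      ≤ (kt d γ r ξ 2)^l * ((l:ℝ)^(j+2*l) / ((j+2*l).factorial : ℝ)) := by
    calc ∑ n ∈ F, ∏ i, kt d γ r ξ (n i) / ((n i).factorial : ℝ)
        ≤ ∑ n ∈ F, (kt d γ r ξ 2)^l * ∏ i, (1:ℝ)/((n i).factorial : ℝ) := by
          apply Finset.sum_le_sum
          intro n hn
          obtain ⟨h3, _⟩ := hmem n hn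
          have : ∏ i, kt d γ r ξ (n i) / ((n i).factorial : ℝ)
              ≤ ∏ i, kt d γ r ξ 2 * (1/((n i).factorial : ℝ)) := by
            apply Finset.prod_le_prod
            · intro i _
              exact div_nonneg (kt_nonneg hd hγ (by have := h3 i; omega) hξ hr) (by positivity)
            · intro i _
              rw [mul_one_div, div_le_div_iff_of_pos_right]
              · exact kt_le_kt_two hd hγ (by have := h3 i; omega) hξ hr
              · exact_mod_cast (n i).factorial_pos
          calc ∏ i, kt d γ r ξ (n i) / ((n i).factorial : ℝ)
              ≤ ∏ i, kt d γ r ξ 2 * (1/((n i).factorial : ℝ)) := this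
          _ = (kt d γ r ξ 2)^l * ∏ i, (1:ℝ)/((n i).factorial : ℝ) := by
              rw [Finset.prod_mul_distrib, Finset.prod_const, card_univ, Fintype.card_fin]
    _ = (kt d γ r ξ 2)^l * ∑ n ∈ F, ∏ i, (1:ℝ)/((n i).factorial : ℝ) := by
          rw [Finset.mul_sum]
    _ ≤ (kt d γ r ξ 2)^l * ((l:ℝ)^(j+2*l) / ((j+2*l).factorial : ℝ)) := by
          apply mul_le_mul_of_nonneg_left _ (by positivity)
          exact sum_inv_fact_le l (j+2*l) F (fun n hn => (hmem n hn).2)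
  unfold ctilde
  rw [← hF]
  calc (1 / (l.factorial : ℝ)) * ∑ n ∈ F, ∏ i, kt d γ r ξ (n i) / ((n i).factorial : ℝ)
      ≤ (1 / (l.factorial : ℝ)) * ((kt d γ r ξ 2)^l * ((l:ℝ)^(j+2*l) / ((j+2*l).factorial : ℝ))) := by
        apply mul_le_mul_of_nonneg_left step (by positivity)
  _ = (kt d γ r ξ 2)^l * (l:ℝ)^(j+2*l) / ((l.factorial:ℝ) * ((j+2*l).factorial : ℝ)) := by
        field_simp


end

lemma geo_le (k : ℕ) : ∑ j ∈ Finset.Icc 1 k, (1/4:ℝ)^j ≤ 1/3 := by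
  have key : ∀ k : ℕ, ∑ j ∈ Finset.Icc 1 k, (1/4:ℝ)^j ≤ 1/3 - (1/3)*(1/4)^k := by
    intro k
    induction k with
    | zero => simp
    | succ n ih =>
      rw [Finset.sum_Icc_succ_top (by omega : 1 ≤ n+1)]
      have : (1/4:ℝ)^(n+1) = (1/4)*(1/4)^n := by ring
      rw [this]
      linarith
  have h := key k
  have : (0:ℝ) ≤ (1/3)*(1/4)^k := by positivity
  linarith


/-- Lemma 3.7 (upper tail): ñ_k is of order 1/√κ̃₂. -/
theorem ntilde_right_order_upper (d : ℕ) (hd : 1 ≤ d) (γ : ℝ) (hγ : (d : ℝ) < γ) :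
    ∃ C₄ c C : ℝ, 1 ≤ C₄ ∧ 0 < c ∧ 0 < C ∧
      ∀ k : ℕ, 1 ≤ k → ∀ (r : ℝ), 1 ≤ r → C₄ * Real.sqrt k ≤ rho d r →
        ∀ ξ : ℝ, 0 ≤ ξ →
          c / Real.sqrt (kt d γ r ξ 2) ≤ ntilde d γ r ξ k ∧
          ntilde d γ r ξ k ≤ C / Real.sqrt (kt d γ r ξ 2) := by
  have hsqpi : (0:ℝ) < Real.sqrt (2*Real.pi) := Real.sqrt_pos.mpr (by positivity)
  refine ⟨4*Real.exp 4, 2/(3*Real.sqrt (2*Real.pi)), 4/(3*Real.sqrt (2*Real.pi)),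
    ?_, by positivity, by positivity, ?_⟩
  · have : (1:ℝ) ≤ Real.exp 4 := Real.one_le_exp (by norm_num)
    linarith
  intro k hk r hr hρ ξ hξ
  set ρ := rho d r with hρdef
  have hρ0 : 0 < ρ := rho_pos hr
  set kt2 := kt d γ r ξ 2 with hkt2def
  have hkt2 : 1 ≤ kt2 := one_le_kt_two hd hγ hξ hr
  have hkt2pos : (0:ℝ) < kt2 := lt_of_lt_of_le one_pos hkt2
  -- the oscillating sum S
  set S := ∑ j ∈ Finset.Icc 1 k, ((-1 : ℝ) ^ j / ρ ^ j) *
      ∑ l ∈ Finset.Icc 1 j,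
        ctilde d γ r ξ k j l / kt2 ^ ((j : ℝ) / 2 + (l : ℝ)) *
          (((Polynomial.hermite (j + 2 * l)).eval 0 : ℤ) : ℝ) with hSdef
  have hSbound : |S| ≤ 1/3 := by
    have hterm : ∀ j ∈ Finset.Icc 1 k,
        |((-1 : ℝ) ^ j / ρ ^ j) * ∑ l ∈ Finset.Icc 1 j,
          ctilde d γ r ξ k j l / kt2 ^ ((j : ℝ) / 2 + (l : ℝ)) *
            (((Polynomial.hermite (j + 2 * l)).eval 0 : ℤ) : ℝ)| ≤ (1/4)^j := by
      intro j hj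
      rw [Finset.mem_Icc] at hj
      obtain ⟨hj1, hjk⟩ := hj
      have hjR : (1:ℝ) ≤ (j:ℝ) := by exact_mod_cast hj1
      -- inner sum bound
      have hinner : |∑ l ∈ Finset.Icc 1 j,
          ctilde d γ r ξ k j l / kt2 ^ ((j : ℝ) / 2 + (l : ℝ)) *
            (((Polynomial.hermite (j + 2 * l)).eval 0 : ℤ) : ℝ)|
          ≤ Real.exp (4*j) * (Real.sqrt j)^j := by
        have hlbound : ∀ l ∈ Finset.Icc 1 j,
            |ctilde d γ r ξ k j l / kt2 ^ ((j : ℝ) / 2 + (l : ℝ)) *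
              (((Polynomial.hermite (j + 2 * l)).eval 0 : ℤ) : ℝ)|
            ≤ Real.exp (4*j) * (Real.sqrt j)^j / j := by
          intro l hl
          rw [Finset.mem_Icc] at hl
          obtain ⟨hl1, hlj⟩ := hl
          set m := j + 2*l with hm
          have hrpowpos : (0:ℝ) < kt2 ^ ((j : ℝ) / 2 + (l : ℝ)) := Real.rpow_pos_of_pos hkt2pos _
          have hctn : 0 ≤ ctilde d γ r ξ k j l := ctilde_nonneg hd hγ hr hξ k j l
          have hfl : (0:ℝ) < (l.factorial:ℝ) := by exact_mod_cast l.factorial_pos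
          have hfm : (0:ℝ) < (m.factorial:ℝ) := by exact_mod_cast m.factorial_pos
          have hpowle : kt2^(l:ℕ) ≤ kt2 ^ ((j : ℝ) / 2 + (l : ℝ)) := by
            rw [← Real.rpow_natCast kt2 l]
            apply Real.rpow_le_rpow_of_exponent_le hkt2
            have : (0:ℝ) ≤ (j:ℝ)/2 := by positivity
            linarith
          have hdiv : ctilde d γ r ξ k j l / kt2 ^ ((j : ℝ) / 2 + (l : ℝ))
              ≤ (l:ℝ)^m / ((l.factorial:ℝ) * (m.factorial : ℝ)) := by
            rw [div_le_iff₀ hrpowpos]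
            calc ctilde d γ r ξ k j l
                ≤ kt2^l * (l:ℝ)^m / ((l.factorial:ℝ) * (m.factorial : ℝ)) :=
                  ctilde_le hd hγ hr hξ k j l hl1
            _ = (l:ℝ)^m / ((l.factorial:ℝ) * (m.factorial : ℝ)) * kt2^l := by ring
            _ ≤ (l:ℝ)^m / ((l.factorial:ℝ) * (m.factorial : ℝ)) * kt2 ^ ((j : ℝ) / 2 + (l : ℝ)) := by
                apply mul_le_mul_of_nonneg_left hpowle (by positivity)
          rw [abs_mul]
          have habs1 : |ctilde d γ r ξ k j l / kt2 ^ ((j : ℝ) / 2 + (l : ℝ))|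
              = ctilde d γ r ξ k j l / kt2 ^ ((j : ℝ) / 2 + (l : ℝ)) :=
            abs_of_nonneg (by positivity)
          rw [habs1]
          have hH := hermite_eval_zero_abs m
          have hm2 : m/2 = l + j/2 := by omega
          calc ctilde d γ r ξ k j l / kt2 ^ ((j : ℝ) / 2 + (l : ℝ)) *
                |(((Polynomial.hermite m).eval 0 : ℤ) : ℝ)|
              ≤ ((l:ℝ)^m / ((l.factorial:ℝ) * (m.factorial : ℝ))) *
                ((m.factorial : ℝ) / (2^(m/2) * ((m/2).factorial : ℝ))) := by
                apply mul_le_mul hdiv hH (abs_nonneg _) (by positivity)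
          _ = (l:ℝ)^m / ((l.factorial:ℝ) * 2^(m/2) * ((m/2).factorial:ℝ)) := by
                field_simp
          _ = (l:ℝ)^(j+2*l) / ((l.factorial:ℝ) * 2^(l + j/2) * ((l + j/2).factorial:ℝ)) := by
                rw [hm2]
          _ ≤ Real.exp (4*j) * (Real.sqrt j)^j / j := core j l hl1 hlj
        calc |∑ l ∈ Finset.Icc 1 j,
            ctilde d γ r ξ k j l / kt2 ^ ((j : ℝ) / 2 + (l : ℝ)) *
              (((Polynomial.hermite (j + 2 * l)).eval 0 : ℤ) : ℝ)|
            ≤ ∑ l ∈ Finset.Icc 1 j, |ctilde d γ r ξ k j l / kt2 ^ ((j : ℝ) / 2 + (l : ℝ)) *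
              (((Polynomial.hermite (j + 2 * l)).eval 0 : ℤ) : ℝ)| :=
              Finset.abs_sum_le_sum_abs _ _
        _ ≤ ∑ _l ∈ Finset.Icc 1 j, Real.exp (4*j) * (Real.sqrt j)^j / j :=
              Finset.sum_le_sum hlbound
        _ = (j:ℝ) * (Real.exp (4*j) * (Real.sqrt j)^j / j) := by
              rw [Finset.sum_const, Nat.card_Icc]
              simp [nsmul_eq_mul]
        _ = Real.exp (4*j) * (Real.sqrt j)^j := by
              field_simp
      -- now the 1/ρ^j factor
      rw [abs_mul, abs_div, abs_pow, abs_neg, abs_one, one_pow, abs_pow,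
        abs_of_pos hρ0]
      have hρj : (4*Real.exp 4 * Real.sqrt j)^j ≤ ρ^j := by
        apply pow_le_pow_left₀ (by positivity)
        calc 4*Real.exp 4 * Real.sqrt j ≤ 4*Real.exp 4 * Real.sqrt k := by
              gcongr <;> exact_mod_cast hjk
        _ ≤ ρ := hρ
      have hexpand : (4*Real.exp 4 * Real.sqrt j)^j
          = 4^j * (Real.exp 4)^j * (Real.sqrt j)^j := by
        rw [mul_pow, mul_pow]
      have hexpj : Real.exp (4*(j:ℝ)) = (Real.exp 4)^j := by
        rw [← Real.exp_nat_mul]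
        congr 1
        push_cast
        ring
      calc 1 / ρ^j * |∑ l ∈ Finset.Icc 1 j,
            ctilde d γ r ξ k j l / kt2 ^ ((j : ℝ) / 2 + (l : ℝ)) *
              (((Polynomial.hermite (j + 2 * l)).eval 0 : ℤ) : ℝ)|
          ≤ 1 / ρ^j * (Real.exp (4*j) * (Real.sqrt j)^j) := by
            apply mul_le_mul_of_nonneg_left hinner (by positivity)
      _ ≤ (1/4)^j := by
            rw [div_mul_eq_mul_div, one_mul, div_le_iff₀ (by positivity)]
            rw [hexpj]
            calc (Real.exp 4)^j * (Real.sqrt j)^j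
                = (4^j * (Real.exp 4)^j * (Real.sqrt j)^j) * (1/4)^j := by
                  rw [one_div, inv_pow]
                  field_simp
            _ ≤ ρ^j * (1/4)^j := by
                  rw [← hexpand]
                  apply mul_le_mul_of_nonneg_right hρj (by positivity)
            _ = (1/4)^j * ρ^j := by ring
    calc |S| ≤ ∑ j ∈ Finset.Icc 1 k, |((-1 : ℝ) ^ j / ρ ^ j) *
        ∑ l ∈ Finset.Icc 1 j,
          ctilde d γ r ξ k j l / kt2 ^ ((j : ℝ) / 2 + (l : ℝ)) *
            (((Polynomial.hermite (j + 2 * l)).eval 0 : ℤ) : ℝ)| := by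
          rw [hSdef]; exact Finset.abs_sum_le_sum_abs _ _
    _ ≤ ∑ j ∈ Finset.Icc 1 k, (1/4:ℝ)^j := Finset.sum_le_sum hterm
    _ ≤ 1/3 := geo_le k
  -- final assembly
  obtain ⟨hSl, hSu⟩ := abs_le.mp hSbound
  have hsqrt : Real.sqrt (2*Real.pi*kt2) = Real.sqrt (2*Real.pi) * Real.sqrt kt2 :=
    Real.sqrt_mul (by positivity) _
  have hsk : (0:ℝ) < Real.sqrt kt2 := Real.sqrt_pos.mpr hkt2pos
  have hnt : ntilde d γ r ξ k = (1 / Real.sqrt (2*Real.pi*kt2)) * (1 + S) := rfl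
  have hspos : (0:ℝ) < Real.sqrt (2*Real.pi*kt2) := Real.sqrt_pos.mpr (by positivity)
  constructor
  · rw [hnt]
    have h1 : (2:ℝ)/3 ≤ 1 + S := by linarith
    calc 2/(3*Real.sqrt (2*Real.pi)) / Real.sqrt kt2
        = (1 / Real.sqrt (2*Real.pi*kt2)) * (2/3) := by
          rw [hsqrt]; field_simp
    _ ≤ (1 / Real.sqrt (2*Real.pi*kt2)) * (1 + S) := by
          apply mul_le_mul_of_nonneg_left h1 (by positivity)
  · rw [hnt]
    have h1 : 1 + S ≤ (4:ℝ)/3 := by linarith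
    calc (1 / Real.sqrt (2*Real.pi*kt2)) * (1 + S)
        ≤ (1 / Real.sqrt (2*Real.pi*kt2)) * (4/3) := by
          apply mul_le_mul_of_nonneg_left h1 (by positivity)
    _ = 4/(3*Real.sqrt (2*Real.pi)) / Real.sqrt kt2 := by
          rw [hsqrt]; field_simp
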